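/- arXiv:1403.7506 — 4 statements merged into one kernel-verified Lean document; each statement's English description precedes it below -/
import Mathlib

section
/- Let n ≥ 3 and m ≥ 1 be integers. For integers n' ≥ 1, m' ≥ 0 and any integer ℓ, let α_{n',m',ℓ} denote the number of involutions in Sym(n') whose disjoint cycle decomposition contains exactly m' transpositions (2-cycles) and whose length (number of inversions) is ℓ; in particular α_{n',0,0} = 1, α_{n',0,ℓ} = 0 for ℓ ≠ 0, and α_{n',m',ℓ} = 0 for ℓ < 0. Then: (i) if ℓ < m then α_{n,m,ℓ} = 0; and (ii) for every ℓ ≥ m, α_{n,m,ℓ} = α_{n-1,m,ℓ} + Σ_{k=1}^{n-1} α_{n-2,m-1,ℓ+1-2k}. -/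
open Equiv Polynomial

/-- The number of inversions (= Coxeter length) of a permutation of `{1,…,n}`. -/
def invCount (n : ℕ) (w : Equiv.Perm (Fin n)) : ℕ :=
  (Finset.univ.filter fun p : Fin n × Fin n => p.1 < p.2 ∧ w p.2 < w p.1).card

/-- The number of transpositions in the disjoint cycle decomposition of an involution. -/
def numTransA (n : ℕ) (w : Equiv.Perm (Fin n)) : ℕ :=
  ((Finset.univ.filter fun i => w i ≠ i).card) / 2

/-- `α_{n,m,ℓ}`: the number of involutions of `Sym(n)` with `m` transpositions and `ℓ`
inversions (indices `m`, `ℓ` range over `ℤ`, so that it vanishes for negative indices). -/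
noncomputable def alphaCount (n : ℕ) (m ℓ : ℤ) : ℕ :=
  {w : Equiv.Perm (Fin n) | w * w = 1 ∧ (numTransA n w : ℤ) = m ∧
    (invCount n w : ℤ) = ℓ}.ncard

/-!
Sort the involutions `w` of `Fin (n + 2)` by the value `w 0`. If `w 0 = 0`, deleting the point `0`
leaves an involution of `Fin (n + 1)` with the same transpositions and inversions. If `w 0 = k ≠ 0`,
then `w` swaps `0` and `k`, and deleting both points leaves an involution of `Fin n` with one
transposition and `2k - 1` inversions fewer: the pairs `(0, y)` with `w y < k` (there are `k`) and
`(x, k)` with `0 < x < k` (there are `k - 1`). Both deletions invert `insertNth a b σ`, the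
permutation sending `a` to `b` and acting as `σ` on the remaining points in their relative order,
whose inversions are counted by splitting the double sum over `Fin (n + 1)` at `a`.

Part (i) holds because every transposition `(a b)` of an involution, `a < b`, is itself an
inversion `(a, b)`.
-/

open Finset

lemma Fin.card_filter_castSucc_lt {n : ℕ} (b : Fin (n + 1)) :
    #{i : Fin n | i.castSucc < b} = b := by
  simp [Fin.lt_def, Fin.card_filter_val_lt, Nat.le_of_lt_succ b.isLt]

lemma Fin.sum_univ_eq_sum_Icc_int {M : Type*} [AddCommMonoid M] (n : ℕ) (f : ℤ → M) :
    ∑ q : Fin n, f ((q : ℤ) + 1) = ∑ k ∈ Icc (1 : ℤ) n, f k := by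
  apply sum_bij (fun (q : Fin n) _ => ((q : ℕ) : ℤ) + 1)
  · intro q _
    simp
  · intro q _ r _ h
    exact Fin.ext (by simpa using h)
  · intro k hk
    rw [mem_Icc] at hk
    exact ⟨⟨(k - 1).toNat, by omega⟩, mem_univ _, by dsimp only; omega⟩
  · simp

namespace Equiv.Perm

variable {n : ℕ}

def insertNth (a b : Fin (n + 1)) (σ : Perm (Fin n)) : Perm (Fin (n + 1)) :=
  (finSuccEquiv' a).trans (σ.optionCongr.trans (finSuccEquiv' b).symm)

@[simp]
lemma insertNth_apply_self (a b : Fin (n + 1)) (σ : Perm (Fin n)) : insertNth a b σ a = b := by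
  simp [insertNth]

@[simp]
lemma insertNth_apply_succAbove (a b : Fin (n + 1)) (σ : Perm (Fin n)) (i : Fin n) :
    insertNth a b σ (a.succAbove i) = b.succAbove (σ i) := by
  simp [insertNth]

@[simp]
lemma insertNth_zero_apply_succ (b : Fin (n + 1)) (σ : Perm (Fin n)) (i : Fin n) :
    insertNth 0 b σ i.succ = b.succAbove (σ i) := by
  simpa using insertNth_apply_succAbove 0 b σ i

lemma insertNth_injective (a b : Fin (n + 1)) : Function.Injective (insertNth a b (n := n)) := by
  intro σ τ h
  exact Equiv.ext fun i => by simpa using congr($h (a.succAbove i))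

lemma insertNth_mul (a b c : Fin (n + 1)) (σ τ : Perm (Fin n)) :
    insertNth b c σ * insertNth a b τ = insertNth a c (σ * τ) := by
  ext x
  induction x using Fin.succAboveCases a <;> simp

@[simp]
lemma insertNth_one (a : Fin (n + 1)) : insertNth a a (1 : Perm (Fin n)) = 1 := by
  ext x
  induction x using Fin.succAboveCases a <;> simp

lemma exists_insertNth_eq (w : Perm (Fin (n + 1))) (a : Fin (n + 1)) :
    ∃ σ, insertNth a (w a) σ = w := by
  have hne (i : Fin n) : w (a.succAbove i) ≠ w a := w.injective.ne (Fin.succAbove_ne a i)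
  choose f hf using fun i => Fin.exists_succAbove_eq (hne i)
  have hf_inj : Function.Injective f := fun i j hij =>
    Fin.succAbove_right_injective (w.injective (by rw [← hf, ← hf, hij]))
  refine ⟨Equiv.ofBijective f (Finite.injective_iff_bijective.mp hf_inj), ?_⟩
  ext x
  induction x using Fin.succAboveCases a <;> simp [hf]

lemma card_filter_apply_eq (a b : Fin (n + 1)) (s : Finset (Perm (Fin (n + 1)))) :
    #{w ∈ s | w a = b} = #{σ | insertNth a b σ ∈ s} := by
  symm
  apply card_bij (fun σ _ => insertNth a b σ)
  · simp
  · exact fun σ _ τ _ h => insertNth_injective a b h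
  · intro w hw
    obtain ⟨hws, rfl⟩ := mem_filter.mp hw
    obtain ⟨σ, hσ⟩ := exists_insertNth_eq w a
    exact ⟨σ, by simp [hσ, hws], hσ⟩

lemma insertNth_self_mul_self_eq_one_iff (a : Fin (n + 1)) (σ : Perm (Fin n)) :
    insertNth a a σ * insertNth a a σ = 1 ↔ σ * σ = 1 := by
  rw [insertNth_mul, ← insertNth_one a, (insertNth_injective a a).eq_iff]

lemma numTransA_insertNth_self (a : Fin (n + 1)) (σ : Perm (Fin n)) :
    numTransA (n + 1) (insertNth a a σ) = numTransA n σ := by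
  simp only [numTransA, card_filter]
  rw [Fin.sum_univ_succAbove _ a]
  simp

lemma invCount_eq_sum (w : Perm (Fin n)) :
    invCount n w = ∑ x, ∑ y, if x < y ∧ w y < w x then 1 else 0 := by
  rw [invCount, card_filter, Fintype.sum_prod_type]

lemma invCount_insertNth (a b : Fin (n + 1)) (σ : Perm (Fin n)) :
    invCount (n + 1) (insertNth a b σ) = invCount n σ
      + #{i | i.castSucc < a ∧ b ≤ (σ i).castSucc} + #{i | a ≤ i.castSucc ∧ (σ i).castSucc < b} := by
  simp only [invCount_eq_sum, card_filter]
  rw [Fin.sum_univ_succAbove _ a]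
  simp_rw [Fin.sum_univ_succAbove _ a]
  simp only [lt_self_iff_false, insertNth_apply_self, and_self, ↓reduceIte,
    Fin.lt_succAbove_iff_le_castSucc, insertNth_apply_succAbove, Fin.succAbove_lt_iff_castSucc_lt,
    sum_boole, Nat.cast_id, zero_add, Fin.succAbove_lt_succAbove_iff, sum_add_distrib]
  ring

lemma invCount_insertNth_zero_left (b : Fin (n + 1)) (σ : Perm (Fin n)) :
    invCount (n + 1) (insertNth 0 b σ) = invCount n σ + b := by
  have : #{i | (σ i).castSucc < b} = #{i : Fin n | i.castSucc < b} :=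
    card_equiv σ (by simp)
  simp [invCount_insertNth, this, Fin.card_filter_castSucc_lt]

lemma invCount_insertNth_zero_right (a : Fin (n + 1)) (σ : Perm (Fin n)) :
    invCount (n + 1) (insertNth a 0 σ) = invCount n σ + a := by
  simp [invCount_insertNth, Fin.card_filter_castSucc_lt]

def insertSwap (q : Fin (n + 1)) (ρ : Perm (Fin n)) : Perm (Fin (n + 2)) :=
  insertNth 0 q.succ (insertNth q 0 ρ)

section insertSwap

variable (q : Fin (n + 1)) (ρ : Perm (Fin n))

@[simp]
lemma insertSwap_apply_zero : insertSwap q ρ 0 = q.succ := insertNth_apply_self ..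

@[simp]
lemma insertSwap_apply_succ_self : insertSwap q ρ q.succ = 0 := by
  simp [insertSwap]

@[simp]
lemma insertSwap_apply_succ_succAbove (i : Fin n) :
    insertSwap q ρ (q.succAbove i).succ = (q.succAbove (ρ i)).succ := by
  simp [insertSwap]

lemma insertSwap_mul_self_eq_one_iff : insertSwap q ρ * insertSwap q ρ = 1 ↔ ρ * ρ = 1 := by
  simp only [Perm.ext_iff, Perm.mul_apply, Perm.one_apply]
  rw [Fin.forall_fin_succ, Fin.forall_iff_succAbove q]
  simp

lemma numTransA_insertSwap : numTransA (n + 2) (insertSwap q ρ) = numTransA n ρ + 1 := by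
  simp only [numTransA, card_filter]
  rw [Fin.sum_univ_succ, Fin.sum_univ_succAbove _ q]
  simp only [insertSwap_apply_zero, ne_eq, Fin.succ_ne_zero, not_false_eq_true, ↓reduceIte,
    insertSwap_apply_succ_self, (Fin.succ_ne_zero q).symm, insertSwap_apply_succ_succAbove,
    Fin.succ_inj, Fin.succAbove_inj, ite_not]
  omega

lemma invCount_insertSwap : invCount (n + 2) (insertSwap q ρ) = invCount n ρ + 2 * q + 1 := by
  rw [insertSwap, invCount_insertNth_zero_left, invCount_insertNth_zero_right, Fin.val_succ]
  ring

end insertSwap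

end Equiv.Perm

open Equiv.Perm

lemma numTransA_le_invCount {n : ℕ} {w : Perm (Fin n)} (hw : w * w = 1) :
    numTransA n w ≤ invCount n w := by
  have hww (x : Fin n) : w (w x) = x := congr($hw x)
  have h_moved : #{x | w x ≠ x} = #{x | x < w x} + #{x | w x < x} := by
    rw [← card_union_of_disjoint (disjoint_filter.2 fun x _ h h' => lt_asymm h h'), ← filter_or]
    simp only [ne_iff_lt_or_gt, or_comm]
  have h_swap : #{x | w x < x} ≤ #{x | x < w x} :=
    card_le_card_of_injOn w (fun x hx => by simp_all) w.injective.injOn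
  have h_inv : #{x | x < w x} ≤ invCount n w :=
    card_le_card_of_injOn (fun x => (x, w x)) (fun x hx => by simp_all)
      (fun x _ y _ h => congr_arg Prod.fst h)
  rw [numTransA]
  omega

def involutionsWith (n : ℕ) (m ℓ : ℤ) : Finset (Perm (Fin n)) :=
  {w | w * w = 1 ∧ (numTransA n w : ℤ) = m ∧ (invCount n w : ℤ) = ℓ}

@[simp]
lemma mem_involutionsWith {n : ℕ} {m ℓ : ℤ} {w : Perm (Fin n)} :
    w ∈ involutionsWith n m ℓ ↔ w * w = 1 ∧ (numTransA n w : ℤ) = m ∧ (invCount n w : ℤ) = ℓ := by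
  simp [involutionsWith]

lemma alphaCount_eq_card (n : ℕ) (m ℓ : ℤ) : alphaCount n m ℓ = #(involutionsWith n m ℓ) := by
  rw [alphaCount, involutionsWith, ← Set.ncard_coe_finset, coe_filter]
  simp

lemma alphaCount_eq_zero_of_lt {n : ℕ} {m ℓ : ℤ} (h : ℓ < m) : alphaCount n m ℓ = 0 := by
  rw [alphaCount_eq_card, card_eq_zero, eq_empty_iff_forall_notMem]
  intro w hw
  obtain ⟨h_invol, rfl, rfl⟩ := mem_involutionsWith.mp hw
  exact absurd (numTransA_le_invCount h_invol) (by omega)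

lemma card_involutionsWith_apply_zero_eq_zero (n : ℕ) (m ℓ : ℤ) :
    #{w ∈ involutionsWith (n + 1) m ℓ | w 0 = 0} = alphaCount n m ℓ := by
  rw [card_filter_apply_eq, alphaCount_eq_card]
  congr 1
  ext σ
  simp [insertNth_self_mul_self_eq_one_iff, numTransA_insertNth_self, invCount_insertNth_zero_left]

lemma card_involutionsWith_apply_zero_eq_succ {n : ℕ} (q : Fin (n + 1)) (m ℓ : ℤ) :
    #{w ∈ involutionsWith (n + 2) m ℓ | w 0 = q.succ}
      = alphaCount n (m - 1) (ℓ + 1 - 2 * ((q : ℤ) + 1)) := by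
  -- an involution with `0 ↦ q.succ` also has `q.succ ↦ 0`
  have h_fix : ∀ σ ∈ ({σ | insertNth 0 q.succ σ ∈ involutionsWith (n + 2) m ℓ} : Finset _),
      σ q = 0 := by
    intro σ hσ
    have h := (mem_involutionsWith.mp (mem_filter.mp hσ).2).1
    simpa [Fin.succAbove_eq_zero_iff (Fin.succ_ne_zero q)] using congr($h 0)
  rw [card_filter_apply_eq, ← filter_true_of_mem h_fix, card_filter_apply_eq, alphaCount_eq_card]
  congr 1
  ext ρ
  simp only [mem_filter, mem_univ, true_and, mem_involutionsWith, ← insertSwap.eq_1,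
    insertSwap_mul_self_eq_one_iff, numTransA_insertSwap, invCount_insertSwap]
  push_cast
  exact and_congr_right fun _ => and_congr (by omega) (by omega)

lemma alphaCount_add_two (n : ℕ) (m ℓ : ℤ) :
    alphaCount (n + 2) m ℓ = alphaCount (n + 1) m ℓ
      + ∑ q : Fin (n + 1), alphaCount n (m - 1) (ℓ + 1 - 2 * ((q : ℤ) + 1)) := by
  rw [alphaCount_eq_card, card_eq_sum_card_fiberwise (f := fun w => w 0) (t := univ)
    (fun _ _ => mem_univ _), Fin.sum_univ_succ, card_involutionsWith_apply_zero_eq_zero]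
  simp only [card_involutionsWith_apply_zero_eq_succ]

theorem involution_length_recursion_A_general (n m : ℕ) (hn : 3 ≤ n) :
    (∀ ℓ : ℤ, ℓ < (m : ℤ) → alphaCount n m ℓ = 0) ∧
    (∀ ℓ : ℤ, (m : ℤ) ≤ ℓ →
      alphaCount n m ℓ = alphaCount (n - 1) m ℓ +
        ∑ k ∈ Finset.Icc (1 : ℤ) ((n : ℤ) - 1),
          alphaCount (n - 2) ((m : ℤ) - 1) (ℓ + 1 - 2 * k)) := by
  refine ⟨fun ℓ hℓ => alphaCount_eq_zero_of_lt hℓ, fun ℓ _ => ?_⟩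
  obtain ⟨n, rfl⟩ : ∃ k, n = k + 2 := ⟨n - 2, by omega⟩
  have h_top : ((n + 2 : ℕ) : ℤ) - 1 = ((n + 1 : ℕ) : ℤ) := by push_cast; ring
  rw [h_top, ← Fin.sum_univ_eq_sum_Icc_int, alphaCount_add_two]
  rfl

theorem involution_length_recursion_A (n m : ℕ) (hn : 3 ≤ n) (hm : 1 ≤ m) :
    (∀ ℓ : ℤ, ℓ < (m : ℤ) → alphaCount n m ℓ = 0) ∧
    (∀ ℓ : ℤ, (m : ℤ) ≤ ℓ →
      alphaCount n m ℓ = alphaCount (n - 1) m ℓ +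
        ∑ k ∈ Finset.Icc (1 : ℤ) ((n : ℤ) - 1),
          alphaCount (n - 2) ((m : ℤ) - 1) (ℓ + 1 - 2 * k)) :=
  involution_length_recursion_A_general n m hn
end

section
/- For integers n ≥ 1 and m ≥ 0, let L_{n,m}(t) = Σ_ℓ α_{n,m,ℓ} t^ℓ ∈ ℤ[t], where α_{n,m,ℓ} is the number of involutions in Sym(n) with exactly m transpositions in their disjoint cycle decomposition and with ℓ inversions (and α_{n,0,0} = 1). Then L_{n,0}(t) = 1 for all n, L_{1,1}(t) = 0, L_{2,1}(t) = t, L_{n,m}(t) = 0 whenever n < 2m, and for all integers n ≥ 3 and m ≥ 1, L_{n,m}(t) = L_{n-1,m}(t) + (t + t³ + ⋯ + t^{2n-3}) · L_{n-2,m-1}(t). -/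
open Equiv Polynomial

open scoped Classical

/-- `L_{n,m}(t) = Σ_ℓ α_{n,m,ℓ} t^ℓ`: the length generating polynomial of the involutions of
`Sym(n)` having exactly `m` transpositions. -/
noncomputable def LA (n m : ℕ) : Polynomial ℤ :=
  ∑ w ∈ Finset.univ.filter
      (fun w : Equiv.Perm (Fin n) => w * w = 1 ∧ numTransA n w = m),
    (Polynomial.X : Polynomial ℤ) ^ invCount n w

/-!
Sort the involutions `w` of `Fin (n + 1)` by `w (last n)`. Those fixing `last n` are the
involutions of `Fin n` transported along `castSucc`, with the same length and number of
transpositions. If `w (last n) = j < last n`, then `w = (j, last n) * w'` where `w'` is an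
involution of the remaining `n - 1` points, which the increasing bijection identifies with an
involution `u` of `Fin (n - 1)`. Then `w` has one transposition more than `u`, and the inversions
of `w` not coming from `u` are the pairs `(x, last n)` with `j < w x` and `(j, y)` with
`j < y < last n`, so `ℓ(w) = ℓ(u) + 2 (n - j) - 1`. Summing over `j` gives `t + t³ + ⋯ + t^(2n-1)`.
-/

open Finset

namespace Equiv.Perm

variable {α β : Type*}

theorem viaEmbedding_mul_self_eq_one_iff (ι : α ↪ β) (u : Perm α) :
    u.viaEmbedding ι * u.viaEmbedding ι = 1 ↔ u * u = 1 := by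
  rw [← viaEmbeddingHom_apply, ← map_mul]
  exact (injective_iff_map_eq_one' _).mp (viaEmbeddingHom_injective ι) (u * u)

theorem card_support_viaEmbedding [Fintype α] [Fintype β] [DecidableEq α] [DecidableEq β]
    (ι : α ↪ β) (u : Perm α) : #(u.viaEmbedding ι).support = #u.support := by
  unfold viaEmbedding
  convert card_support_extend_domain (ofInjective ι.1 ι.2)

theorem exists_viaEmbedding_eq (ι : α ↪ β) {w : Perm β} (hw : ∀ x ∉ Set.range ι, w x = x) :
    ∃ u : Perm α, u.viaEmbedding ι = w := by
  have hrange : ∀ x, w x ∈ Set.range ι ↔ x ∈ Set.range ι := by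
    intro x
    by_cases hx : x ∈ Set.range ι
    · refine iff_of_true (by_contra fun hwx => hwx ?_) hx
      rwa [w.injective (hw _ hwx)]
    · rw [hw x hx]
  refine ⟨(ofInjective ι.1 ι.2).symm.permCongr (w.subtypePerm hrange), ?_⟩
  ext x
  by_cases hx : x ∈ Set.range ι
  · obtain ⟨i, rfl⟩ := hx
    rw [viaEmbedding_apply]
    simp [permCongr_apply, apply_ofInjective_symm]
  · rw [viaEmbedding_apply_of_notMem _ _ _ hx, hw x hx]

end Equiv.Perm

def inversions (n : ℕ) (w : Perm (Fin n)) : Finset (Fin n × Fin n) :=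
  {p | p.1 < p.2 ∧ w p.2 < w p.1}

theorem invCount_eq_card_inversions (n : ℕ) (w : Perm (Fin n)) :
    invCount n w = #(inversions n w) := rfl

theorem inversions_map_orderEmbedding {s t : ℕ} (ι : Fin s ↪o Fin t) {w : Perm (Fin t)}
    {u : Perm (Fin s)} (h : ∀ i, w (ι i) = ι (u i)) :
    (inversions s u).map (ι.toEmbedding.prodMap ι.toEmbedding) =
      {p ∈ inversions t w | p.1 ∈ Set.range ι ∧ p.2 ∈ Set.range ι} := by
  ext ⟨x, y⟩
  simp only [inversions, mem_map, mem_filter, mem_univ, true_and, Prod.exists,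
    Function.Embedding.coe_prodMap, Prod.map_apply, Prod.mk.injEq]
  constructor
  · rintro ⟨i, j, ⟨hij, hu⟩, rfl, rfl⟩
    simp [h, hij, hu]
  · rintro ⟨⟨hxy, hw⟩, ⟨i, rfl⟩, ⟨j, rfl⟩⟩
    rw [h, h] at hw
    exact ⟨i, j, ⟨ι.lt_iff_lt.mp hxy, ι.lt_iff_lt.mp hw⟩, rfl, rfl⟩

theorem invCount_eq_add_card_inversions_outside_range {s t : ℕ} (ι : Fin s ↪o Fin t)
    {w : Perm (Fin t)} {u : Perm (Fin s)} (h : ∀ i, w (ι i) = ι (u i)) :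
    invCount t w =
      invCount s u + #{p ∈ inversions t w | p.1 ∉ Set.range ι ∨ p.2 ∉ Set.range ι} := by
  rw [invCount_eq_card_inversions, invCount_eq_card_inversions, ← card_filter_add_card_filter_not
    (fun p : Fin t × Fin t => p.1 ∈ Set.range ι ∧ p.2 ∈ Set.range ι),
    ← inversions_map_orderEmbedding ι h, card_map]
  simp only [not_and_or]

theorem card_inversions_involving_of_swaps_last {n : ℕ} {w : Perm (Fin (n + 1))}
    {J : Fin (n + 1)} (hJ : J < Fin.last n) (hwL : w (Fin.last n) = J) (hwJ : w J = Fin.last n) :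
    #{p ∈ inversions (n + 1) w | p.1 = J ∨ p.1 = Fin.last n ∨ p.2 = J ∨ p.2 = Fin.last n} =
      #{x | J < w x} + #(Ioo J (Fin.last n)) := by
  have hdisj :
      Disjoint (({x | J < w x} : Finset _).map (Function.Embedding.sectL _ (Fin.last n)))
        ((Ioo J (Fin.last n)).map (Function.Embedding.sectR J _)) := by
    simp only [disjoint_left, mem_map, mem_Ioo]
    rintro _ ⟨x, -, rfl⟩ ⟨y, ⟨-, hy⟩, hxy⟩
    exact hy.ne (congrArg Prod.snd hxy)
  rw [← card_map (Function.Embedding.sectL _ (Fin.last n)) (s := {x | J < w x}),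
    ← card_map (Function.Embedding.sectR J _) (s := Ioo _ _), ← card_union_of_disjoint hdisj]
  congr 1
  ext ⟨x, y⟩
  simp only [inversions, mem_filter, mem_univ, true_and, mem_union, mem_map, mem_Ioo,
    Function.Embedding.sectL_apply, Function.Embedding.sectR_apply, Prod.mk.injEq]
  constructor
  · rintro ⟨⟨hxy, hw⟩, rfl | rfl | rfl | rfl⟩
    · by_cases hy : y = Fin.last n
      · exact .inl ⟨x, by rwa [hwJ], rfl, hy.symm⟩
      · exact .inr ⟨y, ⟨hxy, Fin.lt_last_iff_ne_last.mpr hy⟩, rfl, rfl⟩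
    · exact absurd hxy (not_lt_of_ge (Fin.le_last y))
    · rw [hwJ] at hw
      exact absurd hw (not_lt_of_ge (Fin.le_last _))
    · exact .inl ⟨x, by rwa [hwL] at hw, rfl, rfl⟩
  · rintro (⟨x, hx, rfl, rfl⟩ | ⟨y, ⟨hJy, hyL⟩, rfl, rfl⟩)
    · have hxL : x ≠ Fin.last n := by rintro rfl; exact hx.ne' hwL
      exact ⟨⟨Fin.lt_last_iff_ne_last.mpr hxL, by rwa [hwL]⟩, .inr (.inr (.inr rfl))⟩
    · have hwy : w y ≠ Fin.last n := fun h => hJy.ne' (w.injective (h.trans hwJ.symm))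
      exact ⟨⟨hJy, by rw [hwJ]; exact Fin.lt_last_iff_ne_last.mpr hwy⟩, .inl rfl⟩

theorem numTransA_eq_card_support_div_two (n : ℕ) (w : Perm (Fin n)) :
    numTransA n w = #w.support / 2 := rfl

theorem numTransA_viaEmbedding {s t : ℕ} (ι : Fin s ↪ Fin t) (u : Perm (Fin s)) :
    numTransA t (u.viaEmbedding ι) = numTransA s u := by
  simp only [numTransA_eq_card_support_div_two, Perm.card_support_viaEmbedding]

theorem LA_zero (n : ℕ) : LA n 0 = 1 := by
  have hone : ({w : Perm (Fin n) | w * w = 1 ∧ numTransA n w = 0} : Finset _) = {1} := by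
    ext w
    simp only [mem_filter, mem_univ, true_and, mem_singleton,
      numTransA_eq_card_support_div_two, Nat.div_eq_zero_iff]
    constructor
    · rintro ⟨-, -, hlt⟩
      exact Perm.card_support_le_one.mp (by have := w.card_support_ne_one; omega)
    · rintro rfl
      simp
  rw [LA, hone, sum_singleton, invCount_eq_card_inversions, card_eq_zero.mpr, pow_zero]
  exact filter_eq_empty_iff.mpr fun p _ h => lt_asymm h.1 h.2

theorem LA_eq_zero_of_lt {n m : ℕ} (h : n < 2 * m) : LA n m = 0 := by
  refine sum_eq_zero fun w hw => absurd (mem_filter.mp hw).2.2 ?_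
  have hcard : #w.support ≤ n := by simpa using card_le_univ w.support
  rw [numTransA_eq_card_support_div_two]
  omega

section FixedLast

variable {b : ℕ}

theorem viaEmbedding_castSuccEmb_apply_last (u : Perm (Fin b)) :
    u.viaEmbedding Fin.castSuccEmb (Fin.last b) = Fin.last b :=
  Perm.viaEmbedding_apply_of_notMem _ _ _ (by simp)

theorem invCount_viaEmbedding_castSuccEmb (u : Perm (Fin b)) :
    invCount (b + 1) (u.viaEmbedding Fin.castSuccEmb) = invCount b u := by
  rw [invCount_eq_add_card_inversions_outside_range Fin.castSuccOrderEmb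
    (Perm.viaEmbedding_apply u Fin.castSuccEmb), add_eq_left, card_eq_zero,
    filter_eq_empty_iff]
  rintro ⟨x, y⟩ hxy hout
  simp only [inversions, mem_filter, mem_univ, true_and] at hxy
  simp only [Fin.castSuccOrderEmb_apply, Set.mem_range, Fin.exists_castSucc_eq, not_not] at hout
  rcases hout with rfl | rfl
  · exact not_lt_of_ge (Fin.le_last y) hxy.1
  · rw [viaEmbedding_castSuccEmb_apply_last] at hxy
    exact not_lt_of_ge (Fin.le_last _) hxy.2

end FixedLast

section LastInTransposition

variable {a : ℕ}

def Fin.castSuccSuccAboveOrderEmb (j : Fin (a + 1)) : Fin a ↪o Fin (a + 2) :=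
  (Fin.succAboveOrderEmb j).trans Fin.castSuccOrderEmb

theorem Fin.mem_range_castSuccSuccAboveOrderEmb {j : Fin (a + 1)} {x : Fin (a + 2)} :
    x ∈ Set.range (Fin.castSuccSuccAboveOrderEmb j) ↔
      x ≠ j.castSucc ∧ x ≠ Fin.last (a + 1) := by
  constructor
  · rintro ⟨i, rfl⟩
    exact ⟨Fin.castSucc_injective _ |>.ne (Fin.succAbove_ne j i), Fin.castSucc_ne_last _⟩
  · rintro ⟨hj, hlast⟩
    obtain ⟨y, rfl⟩ := Fin.exists_castSucc_eq.mpr hlast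
    obtain ⟨i, rfl⟩ := Fin.exists_succAbove_eq (mt (congrArg Fin.castSucc) hj)
    exact ⟨i, rfl⟩

noncomputable def extendByTransposition (j : Fin (a + 1)) (u : Perm (Fin a)) :
    Perm (Fin (a + 2)) :=
  swap j.castSucc (Fin.last (a + 1)) * u.viaEmbedding (Fin.castSuccSuccAboveOrderEmb j).toEmbedding

theorem extendByTransposition_apply_last (j : Fin (a + 1)) (u : Perm (Fin a)) :
    extendByTransposition j u (Fin.last (a + 1)) = j.castSucc := by
  rw [extendByTransposition, Perm.mul_apply, Perm.viaEmbedding_apply_of_notMem _ _ _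
    fun h => (Fin.mem_range_castSuccSuccAboveOrderEmb.mp h).2 rfl, swap_apply_right]

theorem extendByTransposition_apply_castSucc (j : Fin (a + 1)) (u : Perm (Fin a)) :
    extendByTransposition j u j.castSucc = Fin.last (a + 1) := by
  rw [extendByTransposition, Perm.mul_apply, Perm.viaEmbedding_apply_of_notMem _ _ _
    fun h => (Fin.mem_range_castSuccSuccAboveOrderEmb.mp h).1 rfl, swap_apply_left]

theorem extendByTransposition_apply_castSuccSuccAboveOrderEmb (j : Fin (a + 1))
    (u : Perm (Fin a)) (i : Fin a) :
    extendByTransposition j u (Fin.castSuccSuccAboveOrderEmb j i) =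
      Fin.castSuccSuccAboveOrderEmb j (u i) := by
  have hmem := Fin.mem_range_castSuccSuccAboveOrderEmb.mp
    (Set.mem_range_self (f := Fin.castSuccSuccAboveOrderEmb j) (u i))
  rw [extendByTransposition, Perm.mul_apply]
  exact (congrArg _ (Perm.viaEmbedding_apply u _ i)).trans (swap_apply_of_ne_of_ne hmem.1 hmem.2)

theorem disjoint_swap_viaEmbedding_castSuccSuccAboveOrderEmb (j : Fin (a + 1))
    (u : Perm (Fin a)) :
    (swap j.castSucc (Fin.last (a + 1))).Disjoint
      (u.viaEmbedding (Fin.castSuccSuccAboveOrderEmb j).toEmbedding) := by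
  intro x
  by_cases hx : x ∈ Set.range (Fin.castSuccSuccAboveOrderEmb j)
  · have hne := Fin.mem_range_castSuccSuccAboveOrderEmb.mp hx
    exact Or.inl (swap_apply_of_ne_of_ne hne.1 hne.2)
  · exact Or.inr (Perm.viaEmbedding_apply_of_notMem _ _ _ hx)

theorem extendByTransposition_mul_self_eq_one_iff (j : Fin (a + 1)) (u : Perm (Fin a)) :
    extendByTransposition j u * extendByTransposition j u = 1 ↔ u * u = 1 := by
  rw [extendByTransposition,
    (disjoint_swap_viaEmbedding_castSuccSuccAboveOrderEmb j u).commute.symm.mul_mul_mul_comm,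
    swap_mul_self, one_mul, Perm.viaEmbedding_mul_self_eq_one_iff]

theorem numTransA_extendByTransposition (j : Fin (a + 1)) (u : Perm (Fin a)) :
    numTransA (a + 2) (extendByTransposition j u) = numTransA a u + 1 := by
  rw [numTransA_eq_card_support_div_two, numTransA_eq_card_support_div_two,
    extendByTransposition,
    (disjoint_swap_viaEmbedding_castSuccSuccAboveOrderEmb j u).card_support_mul,
    Perm.card_support_swap (Fin.castSucc_lt_last j).ne, Perm.card_support_viaEmbedding]
  omega

theorem extendByTransposition_injective (j : Fin (a + 1)) :
    Function.Injective (extendByTransposition (a := a) j) :=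
  fun _ _ h => Perm.viaEmbeddingHom_injective _ (mul_left_cancel h)

theorem exists_extendByTransposition_eq {j : Fin (a + 1)} {w : Perm (Fin (a + 2))}
    (hw : w * w = 1) (hlast : w (Fin.last (a + 1)) = j.castSucc) :
    ∃ u, extendByTransposition j u = w := by
  have hcastSucc : w j.castSucc = Fin.last (a + 1) := by
    rw [← hlast, ← Perm.mul_apply, hw, Perm.one_apply]
  obtain ⟨u, hu⟩ := Perm.exists_viaEmbedding_eq (Fin.castSuccSuccAboveOrderEmb j).toEmbedding
    (w := swap j.castSucc (Fin.last (a + 1)) * w) (by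
      intro x hx
      have hx' := not_and_or.mp (mt Fin.mem_range_castSuccSuccAboveOrderEmb.mpr hx)
      rw [not_ne_iff, not_ne_iff] at hx'
      rcases hx' with rfl | rfl <;> simp [hlast, hcastSucc])
  refine ⟨u, ?_⟩
  rw [extendByTransposition, hu, ← mul_assoc, swap_mul_self, one_mul]

theorem invCount_extendByTransposition (j : Fin (a + 1)) (u : Perm (Fin a)) :
    invCount (a + 2) (extendByTransposition j u) = invCount a u + (2 * (a - j) + 1) := by
  have hcard : #{x | j.castSucc < extendByTransposition j u x} = #(Ioi j.castSucc) :=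
    card_equiv (extendByTransposition j u) fun x => by simp
  rw [invCount_eq_add_card_inversions_outside_range (Fin.castSuccSuccAboveOrderEmb j)
    (extendByTransposition_apply_castSuccSuccAboveOrderEmb j u)]
  simp only [Fin.mem_range_castSuccSuccAboveOrderEmb, not_and_or, not_ne_iff, or_assoc]
  rw [card_inversions_involving_of_swaps_last (Fin.castSucc_lt_last j)
    (extendByTransposition_apply_last j u) (extendByTransposition_apply_castSucc j u),
    hcard, Fin.card_Ioi, Fin.card_Ioo]
  simp only [add_tsub_cancel_right, Fin.val_castSucc, Fin.val_last]
  omega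

end LastInTransposition

theorem sum_filter_X_pow_invCount_eq_X_pow_mul_LA {s t m m' k : ℕ}
    (φ : Perm (Fin s) → Perm (Fin t)) (hφ : Function.Injective φ)
    (hinv : ∀ u, invCount t (φ u) = invCount s u + k)
    (P : Perm (Fin t) → Prop) [DecidablePred P]
    (hrange : ∀ w, ((w * w = 1 ∧ numTransA t w = m) ∧ P w) ↔
      ∃ u, (u * u = 1 ∧ numTransA s u = m') ∧ φ u = w) :
    ∑ w ∈ {w : Perm (Fin t) | w * w = 1 ∧ numTransA t w = m} with P w,
        (X : ℤ[X]) ^ invCount t w = X ^ k * LA s m' := by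
  have himage : ({w : Perm (Fin t) | w * w = 1 ∧ numTransA t w = m} : Finset _).filter P =
      ({u : Perm (Fin s) | u * u = 1 ∧ numTransA s u = m'} : Finset _).image φ := by
    ext w
    simpa only [mem_filter, mem_univ, true_and, mem_image] using hrange w
  rw [himage, sum_image hφ.injOn, LA, mul_sum]
  exact sum_congr rfl fun u _ => by rw [hinv, pow_add, mul_comm]

theorem sum_filter_apply_last_eq_last (b m : ℕ) :
    ∑ w ∈ {w : Perm (Fin (b + 1)) | w * w = 1 ∧ numTransA (b + 1) w = m}
        with w (Fin.last b) = Fin.last b, (X : ℤ[X]) ^ invCount (b + 1) w = LA b m := by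
  rw [← one_mul (LA b m), ← pow_zero X]
  refine sum_filter_X_pow_invCount_eq_X_pow_mul_LA (fun u => u.viaEmbedding Fin.castSuccEmb)
    (Perm.viaEmbeddingHom_injective _)
    (fun u => by rw [invCount_viaEmbedding_castSuccEmb, add_zero]) _
    fun w => ⟨?_, ?_⟩
  · rintro ⟨⟨hw, hm⟩, hlast⟩
    obtain ⟨u, rfl⟩ := Perm.exists_viaEmbedding_eq Fin.castSuccEmb (w := w) fun x hx => by
      obtain rfl : x = Fin.last b := by_contra fun h => hx (Fin.exists_castSucc_eq.mpr h)
      exact hlast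
    rw [Perm.viaEmbedding_mul_self_eq_one_iff] at hw
    rw [numTransA_viaEmbedding] at hm
    exact ⟨u, ⟨hw, hm⟩, rfl⟩
  · rintro ⟨u, ⟨hu, rfl⟩, rfl⟩
    exact ⟨⟨(Perm.viaEmbedding_mul_self_eq_one_iff _ _).mpr hu, numTransA_viaEmbedding _ _⟩,
      viaEmbedding_castSuccEmb_apply_last u⟩

theorem sum_filter_apply_last_eq_castSucc (a m : ℕ) (j : Fin (a + 1)) :
    ∑ w ∈ {w : Perm (Fin (a + 2)) | w * w = 1 ∧ numTransA (a + 2) w = m + 1}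
        with w (Fin.last (a + 1)) = j.castSucc, (X : ℤ[X]) ^ invCount (a + 2) w =
      X ^ (2 * (a - j) + 1) * LA a m := by
  refine sum_filter_X_pow_invCount_eq_X_pow_mul_LA (extendByTransposition j)
    (extendByTransposition_injective j) (invCount_extendByTransposition j) _
    fun w => ⟨?_, ?_⟩
  · rintro ⟨⟨hw, hm⟩, hlast⟩
    obtain ⟨u, rfl⟩ := exists_extendByTransposition_eq hw hlast
    rw [extendByTransposition_mul_self_eq_one_iff] at hw
    rw [numTransA_extendByTransposition] at hm
    exact ⟨u, ⟨hw, by omega⟩, rfl⟩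
  · rintro ⟨u, ⟨hu, rfl⟩, rfl⟩
    exact ⟨⟨(extendByTransposition_mul_self_eq_one_iff _ _).mpr hu,
      numTransA_extendByTransposition _ _⟩, extendByTransposition_apply_last j u⟩

theorem LA_add_two_add_one (a m : ℕ) :
    LA (a + 2) (m + 1) = LA (a + 1) (m + 1) +
      (∑ k ∈ range (a + 1), (X : ℤ[X]) ^ (2 * k + 1)) * LA a m := by
  rw [LA, ← sum_fiberwise _ (fun w : Perm (Fin (a + 2)) => w (Fin.last (a + 1))),
    Fin.sum_univ_castSucc, sum_filter_apply_last_eq_last, add_comm]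
  simp only [sum_filter_apply_last_eq_castSucc, ← sum_mul]
  congr 2
  rw [Fin.sum_univ_eq_sum_range (fun k => (X : ℤ[X]) ^ (2 * (a - k) + 1)),
    ← sum_range_reflect]
  exact sum_congr rfl fun k hk => by rw [mem_range] at hk; congr 3; omega

theorem involution_length_polynomial_recursion_A :
    (∀ n : ℕ, 1 ≤ n → LA n 0 = 1) ∧
    LA 1 1 = 0 ∧
    LA 2 1 = Polynomial.X ∧
    (∀ n m : ℕ, 1 ≤ n → n < 2 * m → LA n m = 0) ∧
    (∀ n m : ℕ, 3 ≤ n → 1 ≤ m →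
      LA n m = LA (n - 1) m +
        (∑ k ∈ Finset.range (n - 1), (Polynomial.X : Polynomial ℤ) ^ (2 * k + 1)) *
          LA (n - 2) (m - 1)) := by
  have hLA11 : LA 1 1 = 0 := LA_eq_zero_of_lt (by norm_num)
  refine ⟨fun n _ => LA_zero n, hLA11, ?_, fun n m _ h => LA_eq_zero_of_lt h, ?_⟩
  · simpa [hLA11, LA_zero] using LA_add_two_add_one 0 0
  · rintro n m hn hm
    obtain ⟨a, rfl⟩ : ∃ a, n = a + 2 := ⟨n - 2, by omega⟩
    obtain ⟨m, rfl⟩ : ∃ m', m = m' + 1 := ⟨m - 1, by omega⟩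
    simpa using LA_add_two_add_one a m
end

section
/- For n ≥ 1 let L_{W(A_n)}(t) = Σ_x t^{ℓ(x)} ∈ ℤ[t], the sum over all involutions x (including the identity) of Sym(n+1), where ℓ(x) is the number of inversions of x. Then L_{W(A_1)}(t) = 1 + t, L_{W(A_2)}(t) = 1 + 2t + t³, and for all n ≥ 3, L_{W(A_n)}(t) = L_{W(A_{n-1})}(t) + (t + t³ + ⋯ + t^{2n-1}) · L_{W(A_{n-2})}(t). -/
open Equiv Polynomial

open scoped Classical

/-- `L_{W(A_n)}(t)`: the involution length polynomial of `W(A_n) ≅ Sym(n+1)`, the sum of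
`t^{ℓ(x)}` over all involutions `x` (including the identity). -/
noncomputable def LAfull (n : ℕ) : Polynomial ℤ :=
  ∑ w ∈ Finset.univ.filter (fun w : Equiv.Perm (Fin (n + 1)) => w * w = 1),
    (Polynomial.X : Polynomial ℤ) ^ invCount (n + 1) w

/-!
Sort the involutions `w` of `Fin (n + 2)` by `p = w 0`. If `p = 0`, `w` is an involution of the
remaining `n + 1` points and no inversion involves `0`. If `p ≠ 0`, `w` is the transposition
`(0 p)` times an involution `e` of the remaining `n` points, and its length is `ℓ(e) + 2p - 1`:
the inversions involving `0` or `p` are the pairs `(0, j)` with `w j < p` and the pairs `(i, p)`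
with `0 < i < p`. Summing over `p = k + 1` gives the factor `t + t³ + ⋯ + t^{2n+1}`.
-/

open Finset

namespace Equiv.Perm

variable {α β : Type*} {f : α ↪ β} {c : Perm β}

theorem apply_notMem_range_of_mul_self_eq_one (hc : c * c = 1) (hcf : ∀ x, c (f x) = f x)
    {y : β} (hy : y ∉ Set.range f) : c y ∉ Set.range f := by
  rintro ⟨x, hx⟩
  refine hy ⟨x, ?_⟩
  rw [← hcf x, hx, ← mul_apply, hc, one_apply]

variable [Fintype α] [DecidableEq β]

theorem mul_viaFintypeEmbedding_apply_image (hcf : ∀ x, c (f x) = f x) (e : Perm α) (x : α) :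
    (c * e.viaFintypeEmbedding f) (f x) = f (e x) := by
  rw [mul_apply, viaFintypeEmbedding_apply_image, hcf]

theorem mul_viaFintypeEmbedding_apply_notMem_range (e : Perm α) {y : β}
    (hy : y ∉ Set.range f) : (c * e.viaFintypeEmbedding f) y = c y := by
  rw [mul_apply, viaFintypeEmbedding_apply_notMem_range _ _ hy]

theorem commute_viaFintypeEmbedding (hc : c * c = 1) (hcf : ∀ x, c (f x) = f x) (e : Perm α) :
    Commute c (e.viaFintypeEmbedding f) := by
  ext y
  by_cases hy : y ∈ Set.range f
  · obtain ⟨x, rfl⟩ := hy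
    simp only [mul_apply, viaFintypeEmbedding_apply_image, hcf]
  · simp only [mul_apply, viaFintypeEmbedding_apply_notMem_range _ _ hy,
      viaFintypeEmbedding_apply_notMem_range _ _ (apply_notMem_range_of_mul_self_eq_one hc hcf hy)]

theorem mul_viaFintypeEmbedding_mul_self_eq_one_iff (hc : c * c = 1)
    (hcf : ∀ x, c (f x) = f x) (e : Perm α) :
    c * e.viaFintypeEmbedding f * (c * e.viaFintypeEmbedding f) = 1 ↔ e * e = 1 := by
  rw [(commute_viaFintypeEmbedding hc hcf e).symm.mul_mul_mul_comm, hc, one_mul,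
    viaFintypeEmbedding, extendDomain_mul, extendDomain_eq_one_iff]

theorem exists_mul_viaFintypeEmbedding_eq (hc : c * c = 1) (hcf : ∀ x, c (f x) = f x)
    {w : Perm β} (hw : w * w = 1) (hwc : ∀ y ∉ Set.range f, w y = c y) :
    ∃ e : Perm α, c * e.viaFintypeEmbedding f = w := by
  have hww (y : β) : w (w y) = y := by rw [← mul_apply, hw, one_apply]
  have hstab (y : β) : w y ∈ Set.range f ↔ y ∈ Set.range f := by
    refine ⟨fun hwy => by_contra fun hy => ?_, fun hy => by_contra fun hwy => ?_⟩
    · exact apply_notMem_range_of_mul_self_eq_one hc hcf hy (hwc y hy ▸ hwy)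
    · obtain ⟨x, rfl⟩ := hy
      have hfix : w (f x) = f x := calc
        w (f x) = (c * c) (w (f x)) := by rw [hc, one_apply]
        _ = c (w (w (f x))) := by rw [mul_apply, hwc _ hwy]
        _ = f x := by rw [hww, hcf]
      exact hwy ⟨x, hfix.symm⟩
  refine ⟨(Equiv.ofInjective f f.injective).symm.permCongr (w.subtypePerm hstab), ?_⟩
  ext y
  by_cases hy : y ∈ Set.range f
  · obtain ⟨x, rfl⟩ := hy
    simp [mul_viaFintypeEmbedding_apply_image hcf, apply_ofInjective_symm]
  · rw [mul_viaFintypeEmbedding_apply_notMem_range _ hy, hwc y hy]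

variable [DecidableEq α] [Fintype β]

theorem sum_mul_viaFintypeEmbedding {M : Type*} [AddCommMonoid M] (hc : c * c = 1)
    (hcf : ∀ x, c (f x) = f x) (g : Perm β → M) :
    ∑ e : Perm α with e * e = 1, g (c * e.viaFintypeEmbedding f) =
      ∑ w : Perm β with w * w = 1 ∧ ∀ y ∉ Set.range f, w y = c y, g w := by
  refine sum_nbij (fun e => c * e.viaFintypeEmbedding f) ?_ ?_ ?_ fun _ _ => rfl
  · intro e he
    simp only [mem_filter, mem_univ, true_and] at he ⊢
    exact ⟨(mul_viaFintypeEmbedding_mul_self_eq_one_iff hc hcf e).2 he,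
      fun y hy => mul_viaFintypeEmbedding_apply_notMem_range e hy⟩
  · intro e _ e' _ h
    ext x
    simpa [mul_viaFintypeEmbedding_apply_image hcf] using DFunLike.congr_fun h (f x)
  · intro w hw
    simp only [coe_filter, mem_univ, true_and, Set.mem_ofPred_eq] at hw
    obtain ⟨e, rfl⟩ := exists_mul_viaFintypeEmbedding_eq hc hcf hw.1 hw.2
    exact ⟨e, by simpa using (mul_viaFintypeEmbedding_mul_self_eq_one_iff hc hcf e).1 hw.1, rfl⟩

end Equiv.Perm

theorem invCount_eq_add_of_strictMono {a b : ℕ} {f : Fin a → Fin b} (hf : StrictMono f)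
    {e : Perm (Fin a)} {w : Perm (Fin b)} (hw : ∀ x, w (f x) = f (e x)) :
    invCount b w = invCount a e + #{q : Fin b × Fin b |
      (q.1 < q.2 ∧ w q.2 < w q.1) ∧ ¬(q.1 ∈ Set.range f ∧ q.2 ∈ Set.range f)} := by
  have inner : #{q : Fin b × Fin b |
      (q.1 < q.2 ∧ w q.2 < w q.1) ∧ q.1 ∈ Set.range f ∧ q.2 ∈ Set.range f} = invCount a e := by
    refine (card_nbij (Prod.map f f) ?_ (hf.injective.prodMap hf.injective).injOn ?_).symm
    · rintro ⟨x, y⟩ h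
      simpa [hw, hf.lt_iff_lt] using h
    · rintro ⟨u, v⟩ hq
      obtain ⟨h, ⟨x, rfl⟩, ⟨y, rfl⟩⟩ : _ ∧ _ ∧ _ := by simpa using hq
      exact ⟨(x, y), by simpa [hw, hf.lt_iff_lt] using h, rfl⟩
  rw [invCount, ← inner, ← card_filter_add_card_filter_not (fun q : Fin b × Fin b =>
    q.1 ∈ Set.range f ∧ q.2 ∈ Set.range f), filter_filter, filter_filter]

theorem invCount_of_apply_zero_eq_zero {n : ℕ} {e : Perm (Fin n)} {w : Perm (Fin (n + 1))}
    (h0 : w 0 = 0) (hw : ∀ x, w x.succ = (e x).succ) : invCount (n + 1) w = invCount n e := by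
  rw [invCount_eq_add_of_strictMono Fin.strictMono_succ hw, add_eq_left, card_eq_zero,
    filter_eq_empty_iff]
  rintro ⟨i, j⟩ - ⟨⟨hij, hw⟩, hout⟩
  simp only [Fin.range_succ, Set.mem_compl_singleton_iff] at hout
  by_cases hi : i = 0
  · subst hi
    exact Fin.not_lt_zero _ (h0 ▸ hw)
  · exact hout ⟨hi, (Fin.pos_of_ne_zero hi).trans hij |>.ne'⟩

theorem range_succAbove_comp_succ {n : ℕ} {p : Fin (n + 2)} (hp : p ≠ 0) :
    Set.range (p.succAbove ∘ Fin.succ) = {0, p}ᶜ := by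
  rw [Set.range_comp, Fin.range_succ, Set.image_compl_eq_range_sdiff_image
    Fin.succAbove_right_injective, Fin.range_succAbove, Set.image_singleton,
    Fin.succAbove_ne_zero_zero hp]
  ext; simp [or_comm]

theorem card_inversions_meeting_transposition {n : ℕ} {w : Perm (Fin (n + 2))} {p : Fin (n + 2)}
    (hp : p ≠ 0) (h0 : w 0 = p) (hp0 : w p = 0) :
    #{q : Fin (n + 2) × Fin (n + 2) |
      (q.1 < q.2 ∧ w q.2 < w q.1) ∧ (q.1 = 0 ∨ q.1 = p ∨ q.2 = 0 ∨ q.2 = p)} = 2 * p - 1 := by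
  have hsplit : ({q : Fin (n + 2) × Fin (n + 2) |
      (q.1 < q.2 ∧ w q.2 < w q.1) ∧ (q.1 = 0 ∨ q.1 = p ∨ q.2 = 0 ∨ q.2 = p)} : Finset _) =
      ({j | w j < p} : Finset _).image (fun j => (0, j)) ∪ (Ioo 0 p).image (fun i => (i, p)) := by
    ext ⟨i, j⟩
    simp only [mem_filter, mem_univ, true_and, mem_union, mem_image, mem_Ioo, Prod.mk.injEq]
    constructor
    · rintro ⟨⟨hij, hwij⟩, rfl | rfl | rfl | rfl⟩
      · exact .inl ⟨j, h0 ▸ hwij, rfl, rfl⟩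
      · exact absurd (hp0 ▸ hwij) (Fin.not_lt_zero _)
      · exact absurd hij (Fin.not_lt_zero _)
      · rcases eq_or_ne i 0 with rfl | hi
        · exact .inl ⟨j, hp0 ▸ Fin.pos_of_ne_zero hp, rfl, rfl⟩
        · exact .inr ⟨i, ⟨Fin.pos_of_ne_zero hi, hij⟩, rfl, rfl⟩
    · rintro (⟨j, hj, rfl, rfl⟩ | ⟨i, ⟨hi, hip⟩, rfl, rfl⟩)
      · refine ⟨⟨Fin.pos_of_ne_zero ?_, h0 ▸ hj⟩, .inl rfl⟩
        rintro rfl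
        exact (h0 ▸ hj).false
      · refine ⟨⟨hip, hp0 ▸ Fin.pos_of_ne_zero ?_⟩, .inr (.inr (.inr rfl))⟩
        rw [← hp0]
        exact fun h => hip.ne (w.injective h)
  have hdisj : Disjoint (({j | w j < p} : Finset _).image (fun j => ((0 : Fin (n + 2)), j)))
      ((Ioo 0 p).image (fun i => (i, p))) := by
    simp only [disjoint_left, mem_image, mem_Ioo]
    rintro _ ⟨j, -, rfl⟩ ⟨i, ⟨hi, -⟩, h⟩
    exact hi.ne' (congrArg Prod.fst h)
  have hlt : #{j | w j < p} = #(Iio p) := card_equiv w (by simp)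
  rw [hsplit, card_union_of_disjoint hdisj, card_image_of_injective _ (Prod.mk_right_injective 0),
    card_image_of_injective _ (Prod.mk_left_injective p), hlt, Fin.card_Iio, Fin.card_Ioo]
  have := Fin.pos_of_ne_zero hp
  simp only [Fin.val_zero]
  omega

theorem invCount_of_apply_zero_ne_zero {n : ℕ} {p : Fin (n + 2)} (hp : p ≠ 0)
    {e : Perm (Fin n)} {w : Perm (Fin (n + 2))} (h0 : w 0 = p) (hp0 : w p = 0)
    (hw : ∀ x, w (p.succAbove x.succ) = p.succAbove (e x).succ) :
    invCount (n + 2) w = invCount n e + (2 * p - 1) := by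
  rw [invCount_eq_add_of_strictMono (f := p.succAbove ∘ Fin.succ)
    ((Fin.strictMono_succAbove p).comp Fin.strictMono_succ) hw,
    ← card_inversions_meeting_transposition hp h0 hp0]
  congr 2
  ext q
  simp only [mem_filter, mem_univ, true_and, range_succAbove_comp_succ hp, Set.mem_compl_iff,
    Set.mem_insert_iff, Set.mem_singleton_iff]
  tauto

noncomputable def involutionLengthPoly (n : ℕ) : ℤ[X] :=
  ∑ w : Perm (Fin n) with w * w = 1, X ^ invCount n w

theorem LAfull_eq_involutionLengthPoly (n : ℕ) : LAfull n = involutionLengthPoly (n + 1) := rfl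

theorem invCount_one (n : ℕ) : invCount n 1 = 0 := by
  simp only [invCount, card_eq_zero, filter_eq_empty_iff]
  exact fun _ _ h => lt_asymm h.1 h.2

theorem involutionLengthPoly_zero : involutionLengthPoly 0 = 1 := by
  simp [involutionLengthPoly, invCount_one, filter_singleton]

theorem involutionLengthPoly_one : involutionLengthPoly 1 = 1 := by
  simp [involutionLengthPoly, invCount_one, filter_singleton]

theorem sum_involutions_apply_zero_eq_zero (n : ℕ) :
    ∑ w : Perm (Fin (n + 1)) with w * w = 1 ∧ w 0 = 0, (X : ℤ[X]) ^ invCount (n + 1) w =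
      involutionLengthPoly n := by
  have h := Perm.sum_mul_viaFintypeEmbedding (f := Fin.succEmb n) (one_mul 1) (fun _ => rfl)
    (fun w => (X : ℤ[X]) ^ invCount (n + 1) w)
  simp only [one_mul] at h
  rw [involutionLengthPoly]
  convert h.symm using 2
  · ext w
    simp [Fin.coe_succEmb]
  · rename_i e _
    exact congrArg (X ^ ·) (invCount_of_apply_zero_eq_zero
      (e.viaFintypeEmbedding_apply_notMem_range (Fin.succEmb n) (by simp [Fin.coe_succEmb]))
      (e.viaFintypeEmbedding_apply_image _)).symm

theorem sum_involutions_apply_zero_eq_of_ne_zero (n : ℕ) {p : Fin (n + 2)} (hp : p ≠ 0) :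
    ∑ w : Perm (Fin (n + 2)) with w * w = 1 ∧ w 0 = p, (X : ℤ[X]) ^ invCount (n + 2) w =
      X ^ (2 * (p : ℕ) - 1) * involutionLengthPoly n := by
  set f := (Fin.succEmb n).trans p.succAboveEmb
  have hrange : Set.range f = {0, p}ᶜ := range_succAbove_comp_succ hp
  have hcf (x : Fin n) : swap 0 p (f x) = f x :=
    swap_apply_of_ne_of_ne (fun h => (hrange ▸ Set.mem_range_self x) (.inl h))
      (fun h => (hrange ▸ Set.mem_range_self x) (.inr h))
  have h := Perm.sum_mul_viaFintypeEmbedding (swap_mul_self 0 p) hcf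
    (fun w => (X : ℤ[X]) ^ invCount (n + 2) w)
  rw [involutionLengthPoly, mul_sum]
  convert h.symm using 2
  · ext w
    simp only [mem_filter, mem_univ, true_and, hrange, Set.mem_compl_iff, not_not,
      Set.mem_insert_iff, Set.mem_singleton_iff, forall_eq_or_imp, forall_eq, swap_apply_left,
      swap_apply_right, and_congr_right_iff]
    intro hw
    refine ⟨fun h0 => ⟨h0, ?_⟩, And.left⟩
    rw [← h0, ← Perm.mul_apply, hw, Perm.one_apply]
  · rename_i e _
    have hout (y : Fin (n + 2)) (hy : y = 0 ∨ y = p) :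
        (swap 0 p * e.viaFintypeEmbedding f) y = swap 0 p y :=
      Perm.mul_viaFintypeEmbedding_apply_notMem_range e
        (by rw [hrange, Set.notMem_compl_iff]; exact hy)
    rw [invCount_of_apply_zero_ne_zero hp (e := e)
      ((hout 0 (.inl rfl)).trans (swap_apply_left _ _))
      ((hout p (.inr rfl)).trans (swap_apply_right _ _))
      (Perm.mul_viaFintypeEmbedding_apply_image hcf e), pow_add, mul_comm]

theorem involutionLengthPoly_add_two (n : ℕ) :
    involutionLengthPoly (n + 2) = involutionLengthPoly (n + 1) +
      (∑ k ∈ range (n + 1), X ^ (2 * k + 1)) * involutionLengthPoly n := by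
  rw [involutionLengthPoly, ← sum_fiberwise _ (fun w : Perm (Fin (n + 2)) => w 0),
    Fin.sum_univ_succ, sum_mul, ← Fin.sum_univ_eq_sum_range]
  simp only [filter_filter]
  rw [sum_involutions_apply_zero_eq_zero]
  congr 1
  refine sum_congr rfl fun j _ => ?_
  rw [sum_involutions_apply_zero_eq_of_ne_zero n j.succ_ne_zero, Fin.val_succ,
    show 2 * (j + 1) - 1 = 2 * (j : ℕ) + 1 by omega]

theorem involution_length_polynomial_A_full :
    LAfull 1 = 1 + Polynomial.X ∧
    LAfull 2 = 1 + 2 * Polynomial.X + Polynomial.X ^ 3 ∧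
    (∀ n : ℕ, 3 ≤ n →
      LAfull n = LAfull (n - 1) +
        (∑ k ∈ Finset.range n, (Polynomial.X : Polynomial ℤ) ^ (2 * k + 1)) *
          LAfull (n - 2)) := by
  have h1 : LAfull 1 = 1 + X := by
    rw [LAfull_eq_involutionLengthPoly, involutionLengthPoly_add_two, involutionLengthPoly_zero,
      involutionLengthPoly_one]
    simp
  refine ⟨h1, ?_, fun n hn => ?_⟩
  · rw [LAfull_eq_involutionLengthPoly, involutionLengthPoly_add_two,
      ← LAfull_eq_involutionLengthPoly, h1, involutionLengthPoly_one]
    simp only [sum_range_succ, sum_range_zero, mul_one]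
    ring
  · obtain ⟨m, rfl⟩ := Nat.exists_eq_add_of_le' hn
    simpa [LAfull_eq_involutionLengthPoly] using involutionLengthPoly_add_two (m + 2)
end

section
/- Let n ≥ 2 be even and let X be the set of involutions x ∈ Sym(n) with no fixed points (i.e. x(i) ≠ i for all i ∈ {1,…,n}). Then Σ_{x∈X} t^{ℓ(x)} = t^{n/2} · Π_{k=1}^{n/2} (1 + t² + t⁴ + ⋯ + t^{4k-4}), where ℓ(x) is the number of inversions of x. -/
/-!
A fixed-point-free involution of `{0, …, N+1}` is the transposition of the last point with its
partner `j`, together with a fixed-point-free involution of the remaining `N` points transported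
along the order embedding that skips `j` and `N+1`. Since that embedding is monotone, inversions
between two remaining points are exactly those of the smaller involution; the other inversions
are the `N+1-j` pairs `(a, N+1)` with `x a > j` and the `N-j` pairs `(j, b)` with `j < b < N+1`.
Summing `t ^ (2N+1-2j)` over `j` gives `P_{N+2} = t (1 + t² + ⋯ + t^{2N}) P_N`, and the product
formula follows by induction on `n / 2`.
-/

open Equiv Polynomial

open scoped Classical

open Finset

namespace FpfInvolution

def inversions {α : Type*} [Fintype α] [LinearOrder α] (w : Perm α) : Finset (α × α) :=
  {p | p.1 < p.2 ∧ w p.2 < w p.1}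

theorem invCount_eq_card_inversions {n : ℕ} (w : Perm (Fin n)) :
    invCount n w = #(inversions w) := rfl

def fpfInvolutions (n : ℕ) : Finset (Perm (Fin n)) :=
  {x | x * x = 1 ∧ ∀ i, x i ≠ i}

theorem mem_fpfInvolutions {n : ℕ} {x : Perm (Fin n)} :
    x ∈ fpfInvolutions n ↔ x * x = 1 ∧ ∀ i, x i ≠ i := by
  simp [fpfInvolutions]

variable {N : ℕ}

def skipTwo (j : Fin (N + 1)) : Fin N ↪o Fin (N + 2) :=
  j.succAboveOrderEmb.trans Fin.castSuccOrderEmb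

theorem mem_range_skipTwo {j : Fin (N + 1)} {b : Fin (N + 2)} :
    b ∈ Set.range (skipTwo j) ↔ b ≠ j.castSucc ∧ b ≠ Fin.last (N + 1) := by
  constructor
  · rintro ⟨i, rfl⟩
    exact ⟨fun h => Fin.succAbove_ne j i (Fin.castSucc_injective _ h),
      (Fin.castSucc_lt_last _).ne⟩
  · rintro ⟨hj, hl⟩
    obtain ⟨c, rfl⟩ := Fin.exists_castSucc_eq.mpr hl
    obtain ⟨i, rfl⟩ := Fin.exists_succAbove_eq (ne_of_apply_ne Fin.castSucc hj)
    exact ⟨i, rfl⟩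

theorem not_last_lt {n : ℕ} (a : Fin (n + 1)) : ¬Fin.last n < a :=
  not_lt.mpr (Fin.le_last a)

@[simp]
theorem skipTwo_ne_castSucc (j : Fin (N + 1)) (i : Fin N) : skipTwo j i ≠ j.castSucc :=
  (mem_range_skipTwo.mp ⟨i, rfl⟩).1

@[simp]
theorem skipTwo_ne_last (j : Fin (N + 1)) (i : Fin N) : skipTwo j i ≠ Fin.last (N + 1) :=
  (mem_range_skipTwo.mp ⟨i, rfl⟩).2

@[simp]
theorem castSucc_ne_skipTwo (j : Fin (N + 1)) (i : Fin N) : j.castSucc ≠ skipTwo j i :=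
  (skipTwo_ne_castSucc j i).symm

@[simp]
theorem last_ne_skipTwo (j : Fin (N + 1)) (i : Fin N) : Fin.last (N + 1) ≠ skipTwo j i :=
  (skipTwo_ne_last j i).symm

@[simp]
theorem last_ne_castSucc {n : ℕ} (i : Fin n) : Fin.last n ≠ i.castSucc :=
  (Fin.castSucc_ne_last i).symm

theorem eq_castSucc_or_eq_last_or_mem_range_skipTwo (j : Fin (N + 1)) (b : Fin (N + 2)) :
    b = j.castSucc ∨ b = Fin.last (N + 1) ∨ b ∈ Set.range (skipTwo j) := by
  rw [mem_range_skipTwo]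
  tauto

noncomputable def pairLast (j : Fin (N + 1)) (x : Perm (Fin N)) : Perm (Fin (N + 2)) :=
  swap j.castSucc (Fin.last (N + 1)) * x.viaFintypeEmbedding (skipTwo j).toEmbedding

section pairLast

variable (j : Fin (N + 1)) (x : Perm (Fin N))

@[simp]
theorem pairLast_apply_last : pairLast j x (Fin.last (N + 1)) = j.castSucc := by
  rw [pairLast, Perm.mul_apply, Perm.viaFintypeEmbedding_apply_notMem_range _ _
    fun h => (mem_range_skipTwo.mp h).2 rfl, swap_apply_right]

@[simp]
theorem pairLast_apply_castSucc : pairLast j x j.castSucc = Fin.last (N + 1) := by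
  rw [pairLast, Perm.mul_apply, Perm.viaFintypeEmbedding_apply_notMem_range _ _
    fun h => (mem_range_skipTwo.mp h).1 rfl, swap_apply_left]

@[simp]
theorem pairLast_apply_skipTwo (i : Fin N) : pairLast j x (skipTwo j i) = skipTwo j (x i) := by
  have hi := mem_range_skipTwo.mp (Set.mem_range_self (f := skipTwo j) (x i))
  have h := Perm.viaFintypeEmbedding_apply_image x (skipTwo j).toEmbedding i
  simp only [RelEmbedding.coe_toEmbedding] at h
  rw [pairLast, Perm.mul_apply, h, swap_apply_of_ne_of_ne hi.1 hi.2]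

end pairLast

section inversions

variable (j : Fin (N + 1)) (x : Perm (Fin N))

theorem card_inversions_pairLast_snd_eq_last :
    #{p ∈ inversions (pairLast j x) | p.2 = Fin.last (N + 1)} = N + 1 - j := by
  calc #{p ∈ inversions (pairLast j x) | p.2 = Fin.last (N + 1)}
      = #(({a | j.castSucc < pairLast j x a} : Finset _).map
          ⟨(·, Fin.last (N + 1)), Prod.mk_left_injective _⟩) := by
        congr 1
        ext ⟨a, b⟩
        rcases eq_castSucc_or_eq_last_or_mem_range_skipTwo j a with rfl | rfl | ⟨a, rfl⟩ <;>
        rcases eq_castSucc_or_eq_last_or_mem_range_skipTwo j b with rfl | rfl | ⟨b, rfl⟩ <;>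
        simp [inversions, Fin.lt_last_iff_ne_last, not_last_lt, Fin.castSucc_ne_last]
    _ = #(Ioi j.castSucc) := (card_map _).trans (card_equiv (pairLast j x) (by simp))
    _ = N + 1 - j := by simp

theorem card_inversions_pairLast_fst_eq_castSucc :
    #{p ∈ inversions (pairLast j x) | p.2 ≠ Fin.last (N + 1) ∧ p.1 = j.castSucc} = N - j := by
  calc #{p ∈ inversions (pairLast j x) | p.2 ≠ Fin.last (N + 1) ∧ p.1 = j.castSucc}
      = #((Ioo j.castSucc (Fin.last (N + 1))).map
          ⟨(j.castSucc, ·), Prod.mk_right_injective _⟩) := by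
        congr 1
        ext ⟨a, b⟩
        rcases eq_castSucc_or_eq_last_or_mem_range_skipTwo j a with rfl | rfl | ⟨a, rfl⟩ <;>
        rcases eq_castSucc_or_eq_last_or_mem_range_skipTwo j b with rfl | rfl | ⟨b, rfl⟩ <;>
        simp [inversions, Fin.lt_last_iff_ne_last, not_last_lt, Fin.castSucc_ne_last]
    _ = N - j := by simp; omega

theorem card_inversions_pairLast_of_ne :
    #{p ∈ inversions (pairLast j x) | p.2 ≠ Fin.last (N + 1) ∧ p.1 ≠ j.castSucc} =
      #(inversions x) := by
  let e := (skipTwo j).toEmbedding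
  calc #{p ∈ inversions (pairLast j x) | p.2 ≠ Fin.last (N + 1) ∧ p.1 ≠ j.castSucc}
      = #((inversions x).map (e.prodMap e)) := by
        congr 1
        ext ⟨a, b⟩
        rcases eq_castSucc_or_eq_last_or_mem_range_skipTwo j a with rfl | rfl | ⟨a, rfl⟩ <;>
        rcases eq_castSucc_or_eq_last_or_mem_range_skipTwo j b with rfl | rfl | ⟨b, rfl⟩ <;>
        simp [inversions, e, Fin.lt_last_iff_ne_last, not_last_lt, Fin.castSucc_ne_last]
    _ = #(inversions x) := card_map _

theorem invCount_pairLast :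
    invCount (N + 2) (pairLast j x) = invCount N x + (2 * N + 1 - 2 * j) := by
  have hj : (j : ℕ) ≤ N := j.is_le
  rw [invCount_eq_card_inversions, invCount_eq_card_inversions,
    ← card_filter_add_card_filter_not (p := fun p => p.2 = Fin.last (N + 1)),
    ← card_filter_add_card_filter_not (p := fun p => p.1 = j.castSucc)
      (s := {p ∈ inversions (pairLast j x) | p.2 ≠ Fin.last (N + 1)}),
    filter_filter, filter_filter, card_inversions_pairLast_snd_eq_last,
    card_inversions_pairLast_fst_eq_castSucc, card_inversions_pairLast_of_ne]
  omega

end inversions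

theorem pairLast_mem_fpfInvolutions {j : Fin (N + 1)} {x : Perm (Fin N)}
    (hx : x ∈ fpfInvolutions N) : pairLast j x ∈ fpfInvolutions (N + 2) := by
  obtain ⟨hinv, hfix⟩ := mem_fpfInvolutions.mp hx
  refine mem_fpfInvolutions.mpr ⟨Perm.ext fun b => ?_, fun b => ?_⟩ <;>
  rcases eq_castSucc_or_eq_last_or_mem_range_skipTwo j b with rfl | rfl | ⟨i, rfl⟩
  · simp
  · simp
  · simp [← Perm.mul_apply x, hinv]
  · simp
  · simp
  · simpa using hfix i

theorem pairLast_injective2 : Function.Injective2 (pairLast (N := N)) := by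
  intro j j' x x' h
  obtain rfl : j = j' := Fin.castSucc_injective _ <| by
    rw [← pairLast_apply_last j x, h, pairLast_apply_last]
  refine ⟨rfl, Perm.ext fun i => (skipTwo j).injective ?_⟩
  rw [← pairLast_apply_skipTwo, h, pairLast_apply_skipTwo]

theorem exists_pairLast_eq {x : Perm (Fin (N + 2))} (hx : x ∈ fpfInvolutions (N + 2)) :
    ∃ j, ∃ x' ∈ fpfInvolutions N, pairLast j x' = x := by
  obtain ⟨hinv, hfix⟩ := mem_fpfInvolutions.mp hx
  have hxx (b) : x (x b) = b := by rw [← Perm.mul_apply, hinv, Perm.one_apply]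
  set j := (x (Fin.last (N + 1))).castPred (hfix _)
  have hj : j.castSucc = x (Fin.last (N + 1)) := Fin.castSucc_castPred _ _
  have hrange (b) : x b ∈ Set.range (skipTwo j) ↔ b ∈ Set.range (skipTwo j) := by
    rw [mem_range_skipTwo, mem_range_skipTwo, hj, x.injective.ne_iff]
    constructor
    · rintro ⟨h1, h2⟩
      exact ⟨fun h => h2 (by rw [h, hxx]), h1⟩
    · rintro ⟨h1, h2⟩
      exact ⟨h2, fun h => h1 (by rw [← h, hxx])⟩
  let E := Equiv.ofInjective _ (skipTwo j).injective
  let x' := E.symm.permCongr (x.subtypePerm hrange)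
  have hx' (i) : skipTwo j (x' i) = x (skipTwo j i) := by
    simp [x', E, Equiv.permCongr_apply, Equiv.apply_ofInjective_symm]
  refine ⟨j, x', mem_fpfInvolutions.mpr
    ⟨Perm.ext fun i => (skipTwo j).injective ?_, fun i h => ?_⟩, Perm.ext fun b => ?_⟩
  · simp [hx', hxx]
  · exact hfix (skipTwo j i) (by rw [← hx', h])
  · rcases eq_castSucc_or_eq_last_or_mem_range_skipTwo j b with rfl | rfl | ⟨i, rfl⟩
    · rw [pairLast_apply_castSucc, hj, hxx]
    · simp [hj]
    · simp [hx']

theorem fpfInvolutions_add_two (N : ℕ) :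
    fpfInvolutions (N + 2) =
      (univ ×ˢ fpfInvolutions N).map ⟨_, pairLast_injective2.uncurry⟩ := by
  ext x
  simp only [mem_map, mem_product, mem_univ, true_and, Function.Embedding.coeFn_mk,
    Prod.exists, Function.uncurry_apply_pair]
  exact ⟨exists_pairLast_eq, fun ⟨_, _, hx', hx⟩ => hx ▸ pairLast_mem_fpfInvolutions hx'⟩

variable {R : Type*} [CommSemiring R]

def fpfLengthSum (t : R) (n : ℕ) : R :=
  ∑ x ∈ fpfInvolutions n, t ^ invCount n x

theorem fpfLengthSum_add_two (t : R) (N : ℕ) :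
    fpfLengthSum t (N + 2) = t * (∑ i ∈ range (N + 1), t ^ (2 * i)) * fpfLengthSum t N := by
  have partner_sum : ∑ j : Fin (N + 1), t ^ (2 * N + 1 - 2 * (j : ℕ)) =
      t * ∑ i ∈ range (N + 1), t ^ (2 * i) := by
    rw [Fin.sum_univ_eq_sum_range (fun j => t ^ (2 * N + 1 - 2 * j)),
      ← sum_range_reflect, mul_sum]
    refine sum_congr rfl fun i hi => ?_
    rw [← pow_succ']
    congr 1
    have := mem_range.mp hi
    omega
  rw [fpfLengthSum, fpfLengthSum, fpfInvolutions_add_two, sum_map, sum_product, ← partner_sum,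
    sum_mul_sum]
  refine sum_congr rfl fun j _ => sum_congr rfl fun x _ => ?_
  simp [invCount_pairLast, pow_add, mul_comm]

theorem fpfLengthSum_two_mul (t : R) (m : ℕ) :
    fpfLengthSum t (2 * m) =
      t ^ m * ∏ k ∈ Icc 1 m, ∑ j ∈ range (2 * k - 1), t ^ (2 * j) := by
  induction m with
  | zero => simp [fpfLengthSum, fpfInvolutions, invCount, filter_singleton]
  | succ m ih =>
    rw [mul_add_one, fpfLengthSum_add_two, ih, prod_Icc_succ_top (by omega),
      show 2 * (m + 1) - 1 = 2 * m + 1 by omega]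
    ring

end FpfInvolution

theorem fpf_involution_length_polynomial_A_general (n : ℕ) (hev : Even n) :
    (∑ x ∈ Finset.univ.filter
        (fun x : Equiv.Perm (Fin n) => x * x = 1 ∧ ∀ i, x i ≠ i),
      (Polynomial.X : Polynomial ℤ) ^ invCount n x) =
    Polynomial.X ^ (n / 2) *
      ∏ k ∈ Finset.Icc 1 (n / 2),
        ∑ j ∈ Finset.range (2 * k - 1), (Polynomial.X : Polynomial ℤ) ^ (2 * j) := by
  obtain ⟨m, rfl⟩ := hev.two_dvd
  rw [Nat.mul_div_cancel_left m two_pos]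
  exact FpfInvolution.fpfLengthSum_two_mul X m

/-- Length polynomial of the fixed-point-free involutions of `Sym(n)` for even `n`. -/
theorem fpf_involution_length_polynomial_A (n : ℕ) (hn : 2 ≤ n) (hev : Even n) :
    (∑ x ∈ Finset.univ.filter
        (fun x : Equiv.Perm (Fin n) => x * x = 1 ∧ ∀ i, x i ≠ i),
      (Polynomial.X : Polynomial ℤ) ^ invCount n x) =
    Polynomial.X ^ (n / 2) *
      ∏ k ∈ Finset.Icc 1 (n / 2),
        ∑ j ∈ Finset.range (2 * k - 1), (Polynomial.X : Polynomial ℤ) ^ (2 * j) :=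
  fpf_involution_length_polynomial_A_general n hev
end
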